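/- arXiv:1210.6414 — 4 statements merged into one kernel-verified Lean document; each statement's English description precedes it below -/
import Mathlib

section
/- Let E be a PBES whose right-hand sides are all in Bounded Quantifier Normal Form (BQNF), and let s be the BQNF-to-PPG transformation. Then s is solution preserving: s(E) ≡ E, i.e., every predicate variable bound in E has the same solution in s(E) as in E. -/
/-!
Parameterised Boolean Equation Systems (PBESs), their solution, Bounded
Quantifier Normal Form (BQNF) and the BQNF-to-PPG transformation `s`.

Predicate variables are natural numbers.  Data terms are represented
semantically: a data term of sort `Bool` is a function `(ℕ → Dv) → Prop` of
the data environment (the valuation `ℕ → Dv` of the parameter vector `d⃗`,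
extended by consing values of quantified variables at position `0`), and the
parameter vector `e⃗` of a variable instantiation `X(e⃗)` is a function
`(ℕ → Dv) → (ℕ → Dv)`.  A fresh equation introduced by `s` takes the extended
parameter list `d⃗ + v⃗`, i.e. it is passed the whole current data environment
(`X̃(d⃗+v⃗)` is `.var x̃ id`).
-/

namespace PBES

/-- Predicate formulae
`φ ::= b | X(e⃗) | φ ∧ φ | φ ∨ φ | φ ⇒ φ | ∀ d:D. φ | ∃ d:D. φ`. -/
inductive PF (Dv : Type) : Type
  | simple : ((ℕ → Dv) → Prop) → PF Dv
  | var    : ℕ → ((ℕ → Dv) → (ℕ → Dv)) → PF Dv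
  | and    : PF Dv → PF Dv → PF Dv
  | or     : PF Dv → PF Dv → PF Dv
  | imp    : PF Dv → PF Dv → PF Dv
  | all    : PF Dv → PF Dv
  | ex     : PF Dv → PF Dv

variable {Dv : Type}

/-- Predicate environments. -/
abbrev PEnv (Dv : Type) := ℕ → (ℕ → Dv) → Prop

/-- Extending a data environment with the value of a quantified variable. -/
def cons (v : Dv) (ε : ℕ → Dv) : ℕ → Dv
  | 0 => v
  | n + 1 => ε n

/-- Semantics of predicate formulae. -/
def sem : PF Dv → PEnv Dv → (ℕ → Dv) → Prop
  | .simple b, _, ε => b ε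
  | .var x e, η, ε => η x (e ε)
  | .and φ ψ, η, ε => sem φ η ε ∧ sem ψ η ε
  | .or φ ψ, η, ε => sem φ η ε ∨ sem ψ η ε
  | .imp φ ψ, η, ε => sem φ η ε → sem ψ η ε
  | .all φ, η, ε => ∀ v : Dv, sem φ η (cons v ε)
  | .ex φ, η, ε => ∃ v : Dv, sem φ η (cons v ε)

/-- Simple formulae: formulae without predicate variables. -/
inductive Simple : PF Dv → Prop
  | simple (b : (ℕ → Dv) → Prop) : Simple (.simple b)
  | and {φ ψ : PF Dv} : Simple φ → Simple ψ → Simple (.and φ ψ)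
  | or {φ ψ : PF Dv} : Simple φ → Simple ψ → Simple (.or φ ψ)
  | imp {φ ψ : PF Dv} : Simple φ → Simple ψ → Simple (.imp φ ψ)
  | all {φ : PF Dv} : Simple φ → Simple (.all φ)
  | ex {φ : PF Dv} : Simple φ → Simple (.ex φ)

/-- `∃ w⃗ : D. (g ∧ X(e⃗))`: an existentially quantified guarded variable
instantiation (the guard `g` is simple). -/
inductive ExG : PF Dv → Type
  | base {g : PF Dv} {x : ℕ} {e : (ℕ → Dv) → (ℕ → Dv)} :
      Simple g → ExG (.and g (.var x e))
  | ex {φ : PF Dv} : ExG φ → ExG (.ex φ)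

/-- `DISJ ::= ⋁ f ∨ ⋁ ∃w⃗:D. (g ∧ X(e⃗))`: a disjunction of simple formulae
and existentially quantified guarded variable instantiations (a bare variable
instantiation `X(e⃗)` is the degenerate case with empty quantifier vector and
trivial guard). -/
inductive Disj : PF Dv → Type
  | simple {f : PF Dv} : Simple f → Disj f
  | var {x : ℕ} {e : (ℕ → Dv) → (ℕ → Dv)} : Disj (.var x e)
  | exg {φ : PF Dv} : ExG φ → Disj φ
  | or {φ ψ : PF Dv} : Disj φ → Disj ψ → Disj (.or φ ψ)

/-- `∀ v⃗ : D. (g ⇒ DISJ)` with `g` simple. -/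
inductive AllG : PF Dv → Type
  | base {g φ : PF Dv} : Simple g → Disj φ → AllG (.imp g φ)
  | all {φ : PF Dv} : AllG φ → AllG (.all φ)

/-- `CONJ ::= ⋀ f ∧ ⋀ ∀v⃗:D. (g ⇒ DISJ)`. -/
inductive Conj : PF Dv → Type
  | simple {f : PF Dv} : Simple f → Conj f
  | allg {φ : PF Dv} : AllG φ → Conj φ
  | and {φ ψ : PF Dv} : Conj φ → Conj ψ → Conj (.and φ ψ)

/-- Bounded Quantifier Normal Form:
`BQNF ::= ∀d⃗:D. b ⇒ BQNF | ∃d⃗:D. b ∧ BQNF | CONJ`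
(with `DISJ` as the degenerate conjunctive case with a single trivially
guarded conjunct). -/
inductive BQNF : PF Dv → Type
  | all {b φ : PF Dv} : Simple b → BQNF φ → BQNF (.all (.imp b φ))
  | ex {b φ : PF Dv} : Simple b → BQNF φ → BQNF (.ex (.and b φ))
  | conj {φ : PF Dv} : Conj φ → BQNF φ
  | disj {φ : PF Dv} : Disj φ → BQNF φ

/-- An equation `σ X(d⃗:D) = φ`; `sign = true` encodes `μ`,
`sign = false` encodes `ν`. -/
structure Eqn (Dv : Type) : Type where
  sign : Bool
  name : ℕ
  rhs : PF Dv

/-- The least fixed point of `f` on a complete lattice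
(for monotone `f` this is the usual least fixed point). -/
def lfp' {α : Type _} [CompleteLattice α] (f : α → α) : α :=
  sInf {a | f a ≤ a}

/-- The greatest fixed point of `f` on a complete lattice. -/
def gfp' {α : Type _} [CompleteLattice α] (f : α → α) : α :=
  sSup {a | a ≤ f a}

/-- The solution of a PBES: the equations are solved in sequence order with
earlier equations outermost; each equation `σ X(d⃗) = φ` is solved as the
least (`μ`) or greatest (`ν`) fixed point of the map induced by `φ` on the
complete lattice `(ℕ → Dv) → Prop`, in the environment determined by the
surrounding equations. -/
def solve : List (Eqn Dv) → PEnv Dv → PEnv Dv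
  | [], η => η
  | e :: E, η =>
    solve E (Function.update η e.name
      (if e.sign then
        lfp' (fun p => sem e.rhs (solve E (Function.update η e.name p)))
       else
        gfp' (fun p => sem e.rhs (solve E (Function.update η e.name p)))))

/-- Whether a formula is a variable instantiation `X'(e⃗)`
(the test used by the paper's function `t`). -/
def isVar : PF Dv → Bool
  | .var _ _ => true
  | _ => false

/-- The transformation `s` on a `∀v⃗:D. (g ⇒ DISJ)` conjunct: the `DISJ`
part `φ'` is replaced by `X̃(d⃗+v⃗)` for a fresh variable `X̃` (the next fresh
name `c`) and the equation `σ X̃(d⃗+v⃗) = φ'` is added, unless `φ'` is already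
a variable instantiation, in which case it is kept (the functions `t` and
`t'`; note that `s` is the identity on a `DISJ` right-hand side). -/
def sAllG (σ : Bool) : (φ : PF Dv) → AllG φ → ℕ → PF Dv × List (Eqn Dv) × ℕ
  | _, .base (g := g) (φ := φ') _ _, c =>
    if isVar φ' then (.imp g φ', [], c)
    else (.imp g (.var c fun ε => ε), [⟨σ, c, φ'⟩], c + 1)
  | _, .all d, c =>
    let r := sAllG σ _ d c
    (.all r.1, r.2)

/-- The transformation `s` on a `CONJ` right-hand side. -/
def sConj (σ : Bool) : (φ : PF Dv) → Conj φ → ℕ → PF Dv × List (Eqn Dv) × ℕ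
  | _, .simple (f := f) _, c => (f, [], c)
  | _, .allg d, c => sAllG σ _ d c
  | _, .and d₁ d₂, c =>
    let r₁ := sConj σ _ d₁ c
    let r₂ := sConj σ _ d₂ r₁.2.2
    (.and r₁.1 r₂.1, r₁.2.1 ++ r₂.2.1, r₂.2.2)

/-- The transformation `s` on one equation `σ X(d⃗) = ξ` with `ξ` in BQNF,
given a supply `c` of fresh variable names (all names `≥ c` are fresh):
it returns the transformed equation followed by the freshly introduced
equations (which carry the same fixed-point sign and are placed in the same
block), together with the new name supply. -/
def sBQ (σ : Bool) : ℕ → (φ : PF Dv) → BQNF φ → ℕ → List (Eqn Dv) × ℕ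
  | x, _, .all (b := b) (φ := φ') _ d, c =>
    if isVar φ' then ([⟨σ, x, .all (.imp b φ')⟩], c)
    else
      let r := sBQ σ c _ d (c + 1)
      (⟨σ, x, .all (.imp b (.var c fun ε => ε))⟩ :: r.1, r.2)
  | x, _, .ex (b := b) (φ := φ') _ d, c =>
    if isVar φ' then ([⟨σ, x, .ex (.and b φ')⟩], c)
    else
      let r := sBQ σ c _ d (c + 1)
      (⟨σ, x, .ex (.and b (.var c fun ε => ε))⟩ :: r.1, r.2)
  | x, _, .conj cj, c =>
    let r := sConj σ _ cj c
    (⟨σ, x, r.1⟩ :: r.2.1, r.2.2)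
  | x, _, .disj (φ := φ') _, c => ([⟨σ, x, φ'⟩], c)

/-- A PBES whose right-hand sides are all in BQNF (each equation comes with a
BQNF derivation of its right-hand side). -/
abbrev DPBES (Dv : Type) := List (Bool × ℕ × Σ φ : PF Dv, BQNF φ)

/-- The underlying PBES. -/
def erase (E : DPBES Dv) : List (Eqn Dv) :=
  E.map fun e => ⟨e.1, e.2.1, e.2.2.1⟩

/-- The transformation `s` on a whole PBES in BQNF. -/
def sPBES : DPBES Dv → ℕ → List (Eqn Dv) × ℕ
  | [], c => ([], c)
  | e :: E, c =>
    let r := sBQ e.1 e.2.1 e.2.2.1 e.2.2.2 c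
    let r' := sPBES E r.2
    (r.1 ++ r'.1, r'.2)

/-- `occurs y φ`: the predicate variable `y` occurs in `φ`. -/
def occurs (y : ℕ) : PF Dv → Prop
  | .simple _ => False
  | .var x _ => x = y
  | .and φ ψ => occurs y φ ∨ occurs y ψ
  | .or φ ψ => occurs y φ ∨ occurs y ψ
  | .imp φ ψ => occurs y φ ∨ occurs y ψ
  | .all φ => occurs y φ
  | .ex φ => occurs y φ

/-!
A fresh variable `X̃` introduced by `s` occurs neither in its own right-hand side nor in any
equation nested inside it, so its fixed point is reached at once: in every environment `X̃`
denotes the value of the subformula it replaced. Substituting these values back, the transformed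
equation of `X` induces the same fixed-point map as the original one, and the solutions of the
original variables are unchanged.
-/

lemma sem_congr {φ : PF Dv} {η₁ η₂ : PEnv Dv}
    (h : ∀ y, occurs y φ → η₁ y = η₂ y) : sem φ η₁ = sem φ η₂ := by
  induction φ with
  | simple b => rfl
  | var x e => funext ε; simp only [sem, h x rfl]
  | and φ ψ ih₁ ih₂ | or φ ψ ih₁ ih₂ | imp φ ψ ih₁ ih₂ =>
    funext ε
    simp only [sem, ih₁ fun y hy => h y (Or.inl hy), ih₂ fun y hy => h y (Or.inr hy)]
  | all φ ih | ex φ ih => funext ε; simp only [sem, ih h]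

lemma lfp'_const {α : Type*} [CompleteLattice α] (k : α) : lfp' (fun _ => k) = k :=
  le_antisymm (sInf_le le_rfl) (le_sInf fun _ ha => ha)

lemma gfp'_const {α : Type*} [CompleteLattice α] (k : α) : gfp' (fun _ => k) = k :=
  le_antisymm (sSup_le fun _ ha => ha) (le_sSup le_rfl)

lemma solve_cons_congr {σ : Bool} {x : ℕ} {φ ψ : PF Dv} {T T' : List (Eqn Dv)} {S : Set ℕ}
    (hsem : ∀ η, sem ψ (solve T η) = sem φ (solve T' η))
    (hS : ∀ η, ∀ y ∈ S, solve T η y = solve T' η y) (η : PEnv Dv) {y : ℕ} (hy : y ∈ S) :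
    solve (⟨σ, x, ψ⟩ :: T) η y = solve (⟨σ, x, φ⟩ :: T') η y := by
  have hmap : (fun p => sem ψ (solve T (Function.update η x p)))
      = fun p => sem φ (solve T' (Function.update η x p)) :=
    funext fun p => hsem _
  simp only [solve, hmap]
  exact hS _ y hy

lemma solve_update_comm {n : ℕ} {T : List (Eqn Dv)}
    (hT : ∀ e ∈ T, e.name ≠ n ∧ ¬ occurs n e.rhs) (η : PEnv Dv) (p : (ℕ → Dv) → Prop) :
    solve T (Function.update η n p) = Function.update (solve T η) n p := by
  induction T generalizing η with
  | nil => rfl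
  | cons e T ih =>
    obtain ⟨hname, hocc⟩ := hT e List.mem_cons_self
    have ih' := ih fun e' h => hT e' (List.mem_cons_of_mem _ h)
    have hswap : ∀ q, solve T (Function.update (Function.update η n p) e.name q)
        = Function.update (solve T (Function.update η e.name q)) n p := fun q => by
      rw [Function.update_comm (Ne.symm hname), ih']
    have hmap : (fun q => sem e.rhs (solve T (Function.update (Function.update η n p) e.name q)))
        = fun q => sem e.rhs (solve T (Function.update η e.name q)) := funext fun q => by
      rw [hswap q]
      exact sem_congr fun y hy => Function.update_of_ne (by rintro rfl; exact hocc hy) _ _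
    simp only [solve]
    rw [hmap, hswap]

lemma solve_fresh_cons (σ : Bool) {n : ℕ} {ψ : PF Dv} {T : List (Eqn Dv)}
    (hT : ∀ e ∈ T, e.name ≠ n ∧ ¬ occurs n e.rhs) (hψ : ¬ occurs n ψ) (η : PEnv Dv) :
    solve (⟨σ, n, ψ⟩ :: T) η = Function.update (solve T η) n (sem ψ (solve T η)) := by
  have hmap : (fun p => sem ψ (solve T (Function.update η n p))) = fun _ => sem ψ (solve T η) :=
    funext fun p => by
      rw [solve_update_comm hT]
      exact sem_congr fun y hy => Function.update_of_ne (by rintro rfl; exact hψ hy) _ _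
  simp only [solve]
  rw [hmap]
  cases σ <;> simp only [Bool.false_eq_true, if_true, if_false, lfp'_const, gfp'_const,
    solve_update_comm hT]

def Avoids (T : List (Eqn Dv)) (c c' : ℕ) : Prop :=
  ∀ e ∈ T, (e.name < c ∨ c' ≤ e.name) ∧ ∀ y, occurs y e.rhs → y < c ∨ c' ≤ y

lemma Avoids.mono {T : List (Eqn Dv)} {c c' d d' : ℕ} (h : Avoids T c c') (hc : c ≤ d)
    (hd : d' ≤ c') : Avoids T d d' := fun e he =>
  ⟨by have := (h e he).1; omega, fun y hy => by have := (h e he).2 y hy; omega⟩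

/-- `Unfolds a φ ψ F c c'`: the formula `ψ`, read in the presence of the auxiliary equations `F`,
means `φ`. The variables of `φ` are below `a`, and the names of `F` lie in `[c, c')`. -/
structure Unfolds (a : ℕ) (φ ψ : PF Dv) (F : List (Eqn Dv)) (c c' : ℕ) : Prop where
  bound_le : a ≤ c
  le : c ≤ c'
  occurs_src : ∀ y, occurs y φ → y < a
  occurs_tgt : ∀ y, occurs y ψ → y < a ∨ c ≤ y
  name_mem : ∀ e ∈ F, c ≤ e.name ∧ e.name < c'
  occurs_defs : ∀ e ∈ F, ∀ y, occurs y e.rhs → y < a ∨ c ≤ y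
  solve_agree : ∀ T, Avoids T c c' → ∀ η z, z < c ∨ c' ≤ z → solve (F ++ T) η z = solve T η z
  sem_eq : ∀ T, Avoids T c c' → ∀ η, sem ψ (solve (F ++ T) η) = sem φ (solve T η)

namespace Unfolds

variable {a c c' c'' : ℕ} {φ φ₁ φ₂ ψ ψ₁ ψ₂ : PF Dv} {F F₁ F₂ : List (Eqn Dv)}

lemma refl (ha : a ≤ c) (hφ : ∀ y, occurs y φ → y < a) : Unfolds a φ φ [] c c where
  bound_le := ha
  le := le_rfl
  occurs_src := hφ
  occurs_tgt y hy := Or.inl (hφ y hy)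
  name_mem _ h := absurd h List.not_mem_nil
  occurs_defs _ h := absurd h List.not_mem_nil
  solve_agree _ _ _ _ _ := rfl
  sem_eq _ _ _ := rfl

lemma define (σ : Bool) (h : Unfolds a φ ψ F (c + 1) c') (ha : a ≤ c) :
    Unfolds a φ (.var c fun ε => ε) (⟨σ, c, ψ⟩ :: F) c c' := by
  have hc : c < c' := h.le
  have hinner : ∀ T, Avoids T c c' → ∀ η z, z < c + 1 ∨ c' ≤ z →
      solve (⟨σ, c, ψ⟩ :: (F ++ T)) η z = Function.update (solve T η) c (sem φ (solve T η)) z := by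
    intro T hT η z hz
    rw [solve_cons_congr (h.sem_eq T (hT.mono (by omega) le_rfl))
      (h.solve_agree T (hT.mono (by omega) le_rfl)) η (S := {z | z < c + 1 ∨ c' ≤ z}) hz]
    refine congrFun (solve_fresh_cons σ (fun e he => ?_) (fun hocc => ?_) η) z
    · have := hT e he
      exact ⟨by omega, fun hocc => by have := this.2 c hocc; omega⟩
    · have := h.occurs_src c hocc; omega
  refine ⟨ha, by omega, h.occurs_src, fun y hy => Or.inr (le_of_eq hy), ?_, ?_, ?_, ?_⟩
  · rintro e (_ | ⟨_, he⟩)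
    · exact ⟨le_rfl, hc⟩
    · have := h.name_mem e he; omega
  · rintro e (_ | ⟨_, he⟩) y hy
    · have := h.occurs_tgt y hy; omega
    · have := h.occurs_defs e he y hy; omega
  · intro T hT η z hz
    rw [List.cons_append, hinner T hT η z (by omega), Function.update_of_ne (by omega)]
  · intro T hT η
    funext ε
    simp only [sem, List.cons_append, hinner T hT η c (by omega), Function.update_self]

lemma map₁ (op : PF Dv → PF Dv) (hocc : ∀ y φ, occurs y (op φ) ↔ occurs y φ)
    (hsem : ∀ φ ψ η η', sem φ η = sem ψ η' → sem (op φ) η = sem (op ψ) η')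
    (h : Unfolds a φ ψ F c c') : Unfolds a (op φ) (op ψ) F c c' where
  bound_le := h.bound_le
  le := h.le
  occurs_src y hy := h.occurs_src y ((hocc y φ).1 hy)
  occurs_tgt y hy := h.occurs_tgt y ((hocc y ψ).1 hy)
  name_mem := h.name_mem
  occurs_defs := h.occurs_defs
  solve_agree := h.solve_agree
  sem_eq T hT η := hsem _ _ _ _ (h.sem_eq T hT η)

lemma map₂ (op : PF Dv → PF Dv → PF Dv)
    (hocc : ∀ y φ₁ φ₂, occurs y (op φ₁ φ₂) ↔ occurs y φ₁ ∨ occurs y φ₂)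
    (hsem : ∀ φ₁ φ₂ ψ₁ ψ₂ η η', sem φ₁ η = sem ψ₁ η' → sem φ₂ η = sem ψ₂ η' →
      sem (op φ₁ φ₂) η = sem (op ψ₁ ψ₂) η')
    (h₁ : Unfolds a φ₁ ψ₁ F₁ c c') (h₂ : Unfolds a φ₂ ψ₂ F₂ c' c'') :
    Unfolds a (op φ₁ φ₂) (op ψ₁ ψ₂) (F₁ ++ F₂) c c'' := by
  have ha := h₁.bound_le
  have hc := h₁.le
  have hc' := h₂.le
  have hT₁ : ∀ T : List (Eqn Dv), Avoids T c c'' → Avoids (F₂ ++ T) c c' := fun T hT e he => by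
    rcases List.mem_append.1 he with he | he
    · have := h₂.name_mem e he
      exact ⟨by omega, fun y hy => by have := h₂.occurs_defs e he y hy; omega⟩
    · exact hT.mono le_rfl h₂.le e he
  have hT₂ : ∀ T : List (Eqn Dv), Avoids T c c'' → Avoids T c' c'' := fun T hT => hT.mono hc le_rfl
  refine ⟨ha, by omega, fun y hy => ?_, fun y hy => ?_, fun e he => ?_, fun e he y hy => ?_,
    fun T hT η z hz => ?_, fun T hT η => ?_⟩
  · rcases (hocc y φ₁ φ₂).1 hy with hy | hy
    exacts [h₁.occurs_src y hy, h₂.occurs_src y hy]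
  · rcases (hocc y ψ₁ ψ₂).1 hy with hy | hy
    · exact h₁.occurs_tgt y hy
    · have := h₂.occurs_tgt y hy; omega
  · rcases List.mem_append.1 he with he | he
    · have := h₁.name_mem e he; omega
    · have := h₂.name_mem e he; omega
  · rcases List.mem_append.1 he with he | he
    · exact h₁.occurs_defs e he y hy
    · have := h₂.occurs_defs e he y hy; omega
  · rw [List.append_assoc, h₁.solve_agree _ (hT₁ T hT) η z (by omega),
      h₂.solve_agree T (hT₂ T hT) η z (by omega)]
  · rw [List.append_assoc]
    refine hsem _ _ _ _ _ _ ?_ ?_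
    · refine (h₁.sem_eq _ (hT₁ T hT) η).trans (sem_congr fun y hy => ?_)
      exact h₂.solve_agree T (hT₂ T hT) η y (by have := h₁.occurs_src y hy; omega)
    · refine (sem_congr fun y hy => ?_).trans (h₂.sem_eq T (hT₂ T hT) η)
      exact h₁.solve_agree _ (hT₁ T hT) η y (by have := h₂.occurs_tgt y hy; omega)

lemma all (h : Unfolds a φ ψ F c c') : Unfolds a (.all φ) (.all ψ) F c c' :=
  h.map₁ .all (fun _ _ => Iff.rfl) fun _ _ _ _ h => by simp only [sem, h]

lemma ex (h : Unfolds a φ ψ F c c') : Unfolds a (.ex φ) (.ex ψ) F c c' :=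
  h.map₁ .ex (fun _ _ => Iff.rfl) fun _ _ _ _ h => by simp only [sem, h]

lemma and (h₁ : Unfolds a φ₁ ψ₁ F₁ c c') (h₂ : Unfolds a φ₂ ψ₂ F₂ c' c'') :
    Unfolds a (.and φ₁ φ₂) (.and ψ₁ ψ₂) (F₁ ++ F₂) c c'' :=
  map₂ .and (fun _ _ _ => Iff.rfl) (fun _ _ _ _ _ _ h₁ h₂ => by simp only [sem, h₁, h₂]) h₁ h₂

lemma imp (h₁ : Unfolds a φ₁ ψ₁ F₁ c c') (h₂ : Unfolds a φ₂ ψ₂ F₂ c' c'') :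
    Unfolds a (.imp φ₁ φ₂) (.imp ψ₁ ψ₂) (F₁ ++ F₂) c c'' :=
  map₂ .imp (fun _ _ _ => Iff.rfl) (fun _ _ _ _ _ _ h₁ h₂ => by simp only [sem, h₁, h₂]) h₁ h₂

end Unfolds

section Transformation

variable {a c : ℕ} {φ : PF Dv}

lemma sAllG_unfolds (σ : Bool) (d : AllG φ) (ha : a ≤ c) (hφ : ∀ y, occurs y φ → y < a) :
    Unfolds a φ (sAllG σ φ d c).1 (sAllG σ φ d c).2.1 c (sAllG σ φ d c).2.2 := by
  induction d generalizing c with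
  | base =>
    unfold sAllG
    split
    · exact Unfolds.refl ha hφ
    · simpa only [List.nil_append] using (Unfolds.refl ha fun y hy => hφ y (Or.inl hy)).imp
        ((Unfolds.refl (by omega) fun y hy => hφ y (Or.inr hy)).define σ ha)
  | all d ih => exact (ih ha hφ).all

lemma sConj_unfolds (σ : Bool) (cj : Conj φ) (ha : a ≤ c) (hφ : ∀ y, occurs y φ → y < a) :
    Unfolds a φ (sConj σ φ cj c).1 (sConj σ φ cj c).2.1 c (sConj σ φ cj c).2.2 := by
  induction cj generalizing c with
  | simple => exact Unfolds.refl ha hφ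
  | allg d => exact sAllG_unfolds σ d ha hφ
  | and d₁ d₂ ih₁ ih₂ =>
    have h₁ := ih₁ ha fun y hy => hφ y (Or.inl hy)
    exact h₁.and (ih₂ (ha.trans h₁.le) fun y hy => hφ y (Or.inr hy))

lemma sBQ_unfolds (σ : Bool) (d : BQNF φ) (x : ℕ) (ha : a ≤ c)
    (hφ : ∀ y, occurs y φ → y < a) :
    ∃ ψ F, (sBQ σ x φ d c).1 = ⟨σ, x, ψ⟩ :: F ∧ Unfolds a φ ψ F c (sBQ σ x φ d c).2 := by
  induction d generalizing x c with
  | all _ d ih =>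
    unfold sBQ
    split
    · exact ⟨_, [], rfl, Unfolds.refl ha hφ⟩
    · obtain ⟨ψ, F, hsplit, h⟩ := ih (c := c + 1) c (by omega) fun y hy => hφ y (Or.inr hy)
      refine ⟨_, _, rfl, ?_⟩
      rw [hsplit]
      simpa only [List.nil_append] using
        ((Unfolds.refl ha fun y hy => hφ y (Or.inl hy)).imp (h.define σ ha)).all
  | ex _ d ih =>
    unfold sBQ
    split
    · exact ⟨_, [], rfl, Unfolds.refl ha hφ⟩
    · obtain ⟨ψ, F, hsplit, h⟩ := ih (c := c + 1) c (by omega) fun y hy => hφ y (Or.inr hy)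
      refine ⟨_, _, rfl, ?_⟩
      rw [hsplit]
      simpa only [List.nil_append] using
        ((Unfolds.refl ha fun y hy => hφ y (Or.inl hy)).and (h.define σ ha)).ex
  | conj cj => exact ⟨_, _, rfl, sConj_unfolds σ cj ha hφ⟩
  | disj => exact ⟨_, [], rfl, Unfolds.refl ha hφ⟩

variable {E : DPBES Dv}

lemma avoids_sPBES (hac : a ≤ c)
    (hE : ∀ e ∈ erase E, e.name < a ∧ ∀ y, occurs y e.rhs → y < a) :
    Avoids (sPBES E c).1 a c := by
  induction E generalizing c with
  | nil => exact fun _ h => absurd h List.not_mem_nil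
  | cons e E ih =>
    obtain ⟨hx, hφ⟩ := hE _ List.mem_cons_self
    obtain ⟨ψ, F, hsplit, h⟩ := sBQ_unfolds e.1 e.2.2.2 e.2.1 hac hφ
    have htail := ih (hac.trans h.le) fun e' he' => hE e' (List.mem_cons_of_mem _ he')
    intro e' he'
    simp only [sPBES, hsplit, List.cons_append, List.mem_cons, List.mem_append] at he'
    rcases he' with rfl | he' | he'
    · exact ⟨Or.inl hx, h.occurs_tgt⟩
    · have := h.name_mem e' he'
      exact ⟨by omega, h.occurs_defs e' he'⟩
    · exact htail.mono le_rfl h.le e' he'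

lemma solve_sPBES_of_lt (hac : a ≤ c)
    (hE : ∀ e ∈ erase E, e.name < a ∧ ∀ y, occurs y e.rhs → y < a) (η : PEnv Dv) {y : ℕ}
    (hy : y < a) : solve (sPBES E c).1 η y = solve (erase E) η y := by
  induction E generalizing c η y with
  | nil => rfl
  | cons e E ih =>
    obtain ⟨-, hφ⟩ := hE _ List.mem_cons_self
    obtain ⟨ψ, F, hsplit, h⟩ := sBQ_unfolds e.1 e.2.2.2 e.2.1 hac hφ
    have hE' : ∀ e' ∈ erase E, e'.name < a ∧ ∀ y, occurs y e'.rhs → y < a :=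
      fun e' he' => hE e' (List.mem_cons_of_mem _ he')
    have htail := ih (hac.trans h.le) hE'
    have hT := (avoids_sPBES (hac.trans h.le) hE').mono h.bound_le le_rfl
    simp only [sPBES, hsplit, List.cons_append]
    refine solve_cons_congr (S := {y | y < a}) (fun η => ?_) (fun η z hz => ?_) η hy
    · exact (h.sem_eq _ hT η).trans (sem_congr fun z hz => htail η (h.occurs_src z hz))
    · exact (h.solve_agree _ hT η z (Or.inl (lt_of_lt_of_le hz h.bound_le))).trans (htail η hz)

end Transformation

theorem bqnf_to_ppg_solution_preserving_general (E : DPBES Dv) (c : ℕ)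
    (hfresh : ∀ e ∈ erase E, e.name < c ∧ ∀ y : ℕ, occurs y e.rhs → y < c)
    (x : ℕ) (hx : x ∈ (erase E).map Eqn.name) (η : PEnv Dv) :
    solve (sPBES E c).1 η x = solve (erase E) η x := by
  obtain ⟨e, he, rfl⟩ := List.mem_map.1 hx
  exact solve_sPBES_of_lt le_rfl hfresh η (hfresh e he).1

/-- **The BQNF-to-PPG transformation `s` is solution preserving**:
for a PBES `E` whose right-hand sides are all in BQNF (with pairwise distinct
left-hand side variables, and `c` a supply of fresh variable names: every
left-hand side name and every occurring variable of `E` is `< c`),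
`s(E) ≡ E`: every predicate variable `x` bound in `E` has the same solution
in `s(E)` as in `E`, under every predicate environment `η`. -/
theorem bqnf_to_ppg_solution_preserving (E : DPBES Dv) (c : ℕ)
    (hnodup : ((erase E).map Eqn.name).Nodup)
    (hfresh : ∀ e ∈ erase E, e.name < c ∧ ∀ y : ℕ, occurs y e.rhs → y < c)
    (x : ℕ) (hx : x ∈ (erase E).map Eqn.name) (η : PEnv Dv) :
    solve (sPBES E c).1 η x = solve (erase E) η x :=
  bqnf_to_ppg_solution_preserving_general E c hfresh x hx η

end PBES
end

section
/- Let E be a PBES whose right-hand sides are all in Bounded Quantifier Normal Form (BQNF) and let s be the BQNF-to-PPG transformation. Then s(E) is a Parameterised Parity Game: every right-hand side of s(E) is either of the conjunctive PPG form ⋀_{i∈I} f_i ∧ ⋀_{j∈J} ∀v⃗:D_j. (g_j ⇒ X_j(e⃗_j)) or of the disjunctive PPG form ⋁_{i∈I} f_i ∨ ⋁_{j∈J} ∃v⃗:D_j. (g_j ∧ X_j(e⃗_j)). -/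
/-!
Parameterised Boolean Equation Systems (PBESs), Bounded Quantifier Normal
Form (BQNF), Parameterised Parity Games (PPGs) and the BQNF-to-PPG
transformation `s`.

Predicate variables are natural numbers.  Data terms are represented
semantically: a data term of sort `Bool` is a function `(ℕ → Dv) → Prop` of
the data environment (the valuation `ℕ → Dv` of the parameter vector `d⃗`,
extended by consing values of quantified variables at position `0`), and the
parameter vector `e⃗` of a variable instantiation `X(e⃗)` is a function
`(ℕ → Dv) → (ℕ → Dv)`.  A fresh equation introduced by `s` takes the extended
parameter list `d⃗ + v⃗`, i.e. it is passed the whole current data environment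
(`X̃(d⃗+v⃗)` is `.var x̃ id`).
-/

namespace PBES

variable {Dv : Type}

/-- `∀ v⃗:D. (g ⇒ X(e⃗))` with `g` simple: a conjunct of the conjunctive PPG
form. -/
inductive AllV : PF Dv → Prop
  | base {g : PF Dv} {x : ℕ} {e : (ℕ → Dv) → (ℕ → Dv)} :
      Simple g → AllV (.imp g (.var x e))
  | all {φ : PF Dv} : AllV φ → AllV (.all φ)

/-- The conjunctive PPG form
`⋀_{i∈I} f_i ∧ ⋀_{j∈J} ∀v⃗:D_j. (g_j ⇒ X_j(e⃗_j))`. -/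
inductive PPGconj : PF Dv → Prop
  | simple {f : PF Dv} : Simple f → PPGconj f
  | allv {φ : PF Dv} : AllV φ → PPGconj φ
  | and {φ ψ : PF Dv} : PPGconj φ → PPGconj ψ → PPGconj (.and φ ψ)

/-- `∃ v⃗:D. (g ∧ X(e⃗))` with `g` simple: a disjunct of the disjunctive PPG
form. -/
inductive ExV : PF Dv → Prop
  | base {g : PF Dv} {x : ℕ} {e : (ℕ → Dv) → (ℕ → Dv)} :
      Simple g → ExV (.and g (.var x e))
  | ex {φ : PF Dv} : ExV φ → ExV (.ex φ)

/-- The disjunctive PPG form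
`⋁_{i∈I} f_i ∨ ⋁_{j∈J} ∃v⃗:D_j. (g_j ∧ X_j(e⃗_j))` (a bare variable
instantiation `X(e⃗)` is the degenerate case with empty quantifier vector and
trivial guard). -/
inductive PPGdisj : PF Dv → Prop
  | simple {f : PF Dv} : Simple f → PPGdisj f
  | exv {φ : PF Dv} : ExV φ → PPGdisj φ
  | var {x : ℕ} {e : (ℕ → Dv) → (ℕ → Dv)} : PPGdisj (.var x e)
  | or {φ ψ : PF Dv} : PPGdisj φ → PPGdisj ψ → PPGdisj (.or φ ψ)

lemma isVar_eq {φ : PF Dv} (h : isVar φ = true) :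
    ∃ x e, φ = .var x e := by
  cases φ <;> simp [isVar] at h ⊢

lemma exg_exv {φ : PF Dv} (d : ExG φ) : ExV φ := by
  induction d with
  | base hg => exact .base hg
  | ex _ ih => exact .ex ih

lemma disj_ppgdisj {φ : PF Dv} (d : Disj φ) : PPGdisj φ := by
  induction d with
  | simple hf => exact .simple hf
  | var => exact .var
  | exg e => exact .exv (exg_exv e)
  | or _ _ ih₁ ih₂ => exact .or ih₁ ih₂

lemma sAllG_spec (σ : Bool) {φ : PF Dv} (d : AllG φ) (c : ℕ) :
    AllV (sAllG σ φ d c).1 ∧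
    ∀ e ∈ (sAllG σ φ d c).2.1, PPGconj e.rhs ∨ PPGdisj e.rhs := by
  induction d generalizing c with
  | @base g φ' hg dd =>
    by_cases h : isVar φ' = true
    · obtain ⟨x, e, rfl⟩ := isVar_eq h
      simp only [sAllG, h, if_true]
      exact ⟨.base hg, by simp⟩
    · simp only [sAllG, h, if_false]
      refine ⟨.base hg, ?_⟩
      rintro e he
      simp at he
      subst he
      exact Or.inr (disj_ppgdisj dd)
  | all d ih =>
    refine ⟨.all (ih c).1, (ih c).2⟩

lemma sConj_spec (σ : Bool) {φ : PF Dv} (d : Conj φ) (c : ℕ) :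
    PPGconj (sConj σ φ d c).1 ∧
    ∀ e ∈ (sConj σ φ d c).2.1, PPGconj e.rhs ∨ PPGdisj e.rhs := by
  induction d generalizing c with
  | simple hf => exact ⟨.simple hf, by simp [sConj]⟩
  | allg a => exact ⟨.allv (sAllG_spec σ a c).1, (sAllG_spec σ a c).2⟩
  | and d₁ d₂ ih₁ ih₂ =>
    refine ⟨.and (ih₁ c).1 (ih₂ _).1, ?_⟩
    intro e he
    simp only [sConj, List.mem_append] at he
    rcases he with he | he
    · exact (ih₁ c).2 e he
    · exact (ih₂ _).2 e he

lemma sBQ_spec (σ : Bool) (x : ℕ) {φ : PF Dv} (d : BQNF φ) (c : ℕ) :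
    ∀ e ∈ (sBQ σ x φ d c).1, PPGconj e.rhs ∨ PPGdisj e.rhs := by
  induction d generalizing x c with
  | @all b φ' hb d ih =>
    by_cases h : isVar φ' = true
    · obtain ⟨y, e', rfl⟩ := isVar_eq h
      simp only [sBQ, h, if_true]
      rintro e he
      simp at he; subst he
      exact Or.inl (.allv (.all (.base hb)))
    · simp only [sBQ, h, Bool.false_eq_true, if_false]
      rintro e he
      simp only [List.mem_cons] at he
      rcases he with rfl | he
      · exact Or.inl (.allv (.all (.base hb)))
      · exact ih c (c + 1) e he
  | @ex b φ' hb d ih =>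
    by_cases h : isVar φ' = true
    · obtain ⟨y, e', rfl⟩ := isVar_eq h
      simp only [sBQ, h, if_true]
      rintro e he
      simp at he; subst he
      exact Or.inr (.exv (.ex (.base hb)))
    · simp only [sBQ, h, Bool.false_eq_true, if_false]
      rintro e he
      simp only [List.mem_cons] at he
      rcases he with rfl | he
      · exact Or.inr (.exv (.ex (.base hb)))
      · exact ih c (c + 1) e he
  | conj cj =>
    rintro e he
    simp only [sBQ, List.mem_cons] at he
    rcases he with rfl | he
    · exact Or.inl (sConj_spec σ cj c).1
    · exact (sConj_spec σ cj c).2 e he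
  | @disj φ' dd =>
    rintro e he
    simp [sBQ] at he; subst he
    exact Or.inr (disj_ppgdisj dd)

/-- **The result of the BQNF-to-PPG transformation is a Parameterised Parity
Game**: for every PBES `E` whose right-hand sides are all in BQNF and every
supply `c` of fresh variable names, every right-hand side of an equation of
`s(E)` is either of the conjunctive PPG form or of the disjunctive PPG
form. -/
theorem bqnf_to_ppg_is_ppg (E : DPBES Dv) (c : ℕ) :
    ∀ e ∈ (sPBES E c).1, PPGconj e.rhs ∨ PPGdisj e.rhs := by
  induction E generalizing c with
  | nil => simp [sPBES]
  | cons e E ih =>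
    intro eq heq
    simp only [sPBES, List.mem_append] at heq
    rcases heq with h | h
    · exact sBQ_spec e.1 e.2.1 e.2.2.2 c eq h
    · exact ih _ eq h

end PBES
end

section
/- Correctness of cached successor computation (Algorithm nextcache): fix a dependency row D k : Fin N → Bool and suppose transition group k is write-independent outside D and read-independent outside D. Then for all states s and u with π_k s = π_k u, the set { nextapply s t k | t ∈ π_k '' (groupnext u k) } equals groupnext s k. In particular, computing group-k successors of s from the cached projected successors of any previously explored state u with the same projection yields exactly groupnext s k. -/
/-!
LTSMin-style partitioned next-state function with transition caching.
States are vectors `s : Fin N → ℕ`, `groupnext s k` is the finite set of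
successors of `s` in transition group `k`, and `D : Fin K → Fin N → Bool`
is the dependency matrix.
-/

/-- `proj D k s` (the projection `π_k s`): the restriction of the state `s`
to the coordinates `i` with `D k i = true`. -/
def proj {N K : ℕ} (D : Fin K → Fin N → Bool) (k : Fin K) (s : Fin N → ℕ) :
    {i : Fin N // D k i = true} → ℕ :=
  fun i => s i.1

/-- `nextapply D k s t`: the state that equals the projected vector `t` on the
coordinates `i` with `D k i = true` and equals `s` elsewhere. -/
def nextapply {N K : ℕ} (D : Fin K → Fin N → Bool) (k : Fin K)
    (s : Fin N → ℕ) (t : {i : Fin N // D k i = true} → ℕ) : Fin N → ℕ :=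
  fun i => if h : D k i = true then t ⟨i, h⟩ else s i

/-- Correctness of cached successor computation (Algorithm `nextcache`):
if transition group `k` is write-independent outside `D` (hypothesis `hW`)
and read-independent outside `D` (hypothesis `hR`), then for all states
`s` and `u` with `π_k s = π_k u`, applying `nextapply` to `s` and each
cached projected successor of `u` yields exactly `groupnext s k`. -/
theorem nextcache_correct {N K : ℕ}
    (groupnext : (Fin N → ℕ) → Fin K → Finset (Fin N → ℕ))
    (D : Fin K → Fin N → Bool) (k : Fin K)
    (hW : ∀ s : Fin N → ℕ, ∀ s' ∈ groupnext s k,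
      ∀ i : Fin N, D k i = false → s' i = s i)
    (hR : ∀ s u : Fin N → ℕ, proj D k s = proj D k u →
      proj D k '' (groupnext s k : Set (Fin N → ℕ)) =
        proj D k '' (groupnext u k : Set (Fin N → ℕ)))
    (s u : Fin N → ℕ) (hsu : proj D k s = proj D k u) :
    nextapply D k s '' (proj D k '' (groupnext u k : Set (Fin N → ℕ))) =
      (groupnext s k : Set (Fin N → ℕ)) := by
  rw [← hR s u hsu]
  have key : ∀ s' ∈ groupnext s k, nextapply D k s (proj D k s') = s' := by
    intro s' hs'
    funext i
    by_cases h : D k i = true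
    · simp [nextapply, proj, h]
    · simp only [nextapply, h, dif_neg]
      exact (hW s s' hs' i (by simpa using h)).symm
  ext x
  constructor
  · rintro ⟨t, ⟨s', hs', rfl⟩, rfl⟩
    rw [key s' hs']; exact hs'
  · intro hx
    exact ⟨proj D k x, ⟨x, hx, rfl⟩, key x hx⟩
end

section
/- Correctness of the partitioned next-state function with caching: define nextst s = ⋃_{k : Fin K} groupnext s k. If every transition group k is write-independent and read-independent outside its dependency row D k, then for any family of states (u_k) with π_k s = π_k (u_k) for each k, the union over k of { nextapply s t k | t ∈ π_k '' (groupnext (u_k) k) } equals nextst s. -/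
/-- The partitioned next-state function: `nextst s = ⋃ k, groupnext s k`. -/
def nextst {N K : ℕ} (groupnext : (Fin N → ℕ) → Fin K → Finset (Fin N → ℕ))
    (s : Fin N → ℕ) : Set (Fin N → ℕ) :=
  ⋃ k : Fin K, (groupnext s k : Set (Fin N → ℕ))

/-- Correctness of the partitioned next-state function with caching: if every
transition group `k` is write-independent (hypothesis `hW`) and
read-independent (hypothesis `hR`) outside its dependency row `D k`, then for
any family of (previously explored) states `u k` with `π_k s = π_k (u k)` for
each `k`, the union over `k` of the states obtained by applying `nextapply` to
`s` and the cached projected successors of `u k` equals `nextst s`. -/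
theorem nextst_cache_correct {N K : ℕ}
    (groupnext : (Fin N → ℕ) → Fin K → Finset (Fin N → ℕ))
    (D : Fin K → Fin N → Bool)
    (hW : ∀ (k : Fin K) (s : Fin N → ℕ), ∀ s' ∈ groupnext s k,
      ∀ i : Fin N, D k i = false → s' i = s i)
    (hR : ∀ (k : Fin K) (s u : Fin N → ℕ), proj D k s = proj D k u →
      proj D k '' (groupnext s k : Set (Fin N → ℕ)) =
        proj D k '' (groupnext u k : Set (Fin N → ℕ)))
    (s : Fin N → ℕ) (u : Fin K → (Fin N → ℕ))
    (hu : ∀ k : Fin K, proj D k s = proj D k (u k)) :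
    (⋃ k : Fin K,
        nextapply D k s '' (proj D k '' (groupnext (u k) k : Set (Fin N → ℕ))))
      = nextst groupnext s := by
  unfold nextst
  apply Set.iUnion_congr
  intro k
  rw [← hR k s (u k) (hu k)]
  ext x
  constructor
  · rintro ⟨t, ⟨s', hs', rfl⟩, rfl⟩
    have : nextapply D k s (proj D k s') = s' := by
      funext i
      by_cases h : D k i = true
      · simp [nextapply, h, proj]
      · simp only [nextapply, h, dif_neg]
        exact (hW k s s' hs' i (by simpa using h)).symm
    rw [this]; exact hs'
  · intro hx
    refine ⟨proj D k x, ⟨x, hx, rfl⟩, ?_⟩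
    funext i
    by_cases h : D k i = true
    · simp [nextapply, h, proj]
    · simp only [nextapply, h, dif_neg]
      exact (hW k s x hx i (by simpa using h)).symm
end
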